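/- Let S⁷ be the unit sphere in ℍ² (ℍ the quaternions) and let the group Sp(1) of unit quaternions act on S⁷ on the right by (p,q)·u = (pu, qu). The group Circle of unit complex numbers, viewed inside ℍ, acts on S⁷ on the left by s·(p,q) = (sp, sq); this action commutes with the Sp(1)-action and hence descends to a continuous action on the orbit space S⁷/Sp(1). There is a homeomorphism Φ from S⁷/Sp(1) to the unit sphere S⁴ = {(v,w,h) ∈ ℂ×ℂ×ℝ : |v|²+|w|²+h² = 1} such that Φ(s·x) = (s²v, w, h) whenever Φ(x) = (v,w,h), for all s ∈ Circle and all x ∈ S⁷/Sp(1). -/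

import Mathlib

/-! The Hopf map `(p, q) ↦ (2 p q̄, ‖p‖² - ‖q‖²) ∈ ℍ × ℝ ≅ ℂ² × ℝ` sends `S⁷` onto `S⁴`, and its
fibres are exactly the right `Sp(1)`-orbits: `p q̄` together with `‖p‖` and `‖q‖` determines
`(p, q)` up to `(p u, q u)`. A continuous bijection from the compact orbit space onto the Hausdorff
space `S⁴` is a homeomorphism. Writing `ℍ = ℂ ⊕ ℂ j`, the action of `s ∈ Circle` conjugates `p q̄`
by `s`, which fixes its `ℂ`-part and multiplies its `j`-part by `s²`. -/

open Quaternion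

/-- The standard embedding `ℂ ⊂ ℍ` of the complex numbers into the quaternions. -/
def Complex.toQuat (z : ℂ) : ℍ[ℝ] := ⟨z.re, z.im, 0, 0⟩

lemma Complex.norm_toQuat (z : ℂ) : ‖z.toQuat‖ = ‖z‖ := by
  have h : Quaternion.normSq z.toQuat = Complex.normSq z := by
    rw [Quaternion.normSq_def']; simp [Complex.toQuat, Complex.normSq_apply]; ring
  have h1 : ‖z.toQuat‖ * ‖z.toQuat‖ = ‖z‖ * ‖z‖ := by
    rw [← Quaternion.normSq_eq_norm_mul_self, h, Complex.normSq_eq_norm_sq, sq]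
  nlinarith [norm_nonneg z.toQuat, norm_nonneg z]

/-- `Sp(1)`: the multiplicative group of quaternions of norm `1`. -/
abbrev Sp1 : Type := {u : ℍ[ℝ] // ‖u‖ = 1}

/-- The unit sphere `S⁷ ⊂ ℍ²`. -/
abbrev SphereH2 : Type := {p : ℍ[ℝ] × ℍ[ℝ] // ‖p.1‖ ^ 2 + ‖p.2‖ ^ 2 = 1}

/-- The unit sphere `S⁴ ⊂ ℂ × ℂ × ℝ`. -/
abbrev SphereCCR : Type := {q : ℂ × ℂ × ℝ // ‖q.1‖ ^ 2 + ‖q.2.1‖ ^ 2 + q.2.2 ^ 2 = 1}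

/-- The orbit relation on `S⁷` of the right `Sp(1)`-action `(p, q) · u = (p u, q u)`. -/
def orbitRelSp1 (x y : SphereH2) : Prop :=
  ∃ u : Sp1, (x.val.1 * u.val, x.val.2 * u.val) = y.val

/-- The left `Circle`-action `s · (p, q) = (s p, s q)` on `S⁷ ⊂ ℍ²`, with `Circle ⊂ ℂ ⊂ ℍ`.
It commutes with the right `Sp(1)`-action, hence descends to the orbit space. -/
noncomputable def circleAct (s : Circle) (x : SphereH2) : SphereH2 :=
  ⟨((s : ℂ).toQuat * x.val.1, (s : ℂ).toQuat * x.val.2), by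
    have h := x.property
    have hs : ‖(s : ℂ).toQuat‖ = 1 := by rw [Complex.norm_toQuat]; exact Circle.norm_coe s
    simp only [norm_mul, hs, one_mul]
    exact h⟩

lemma exists_homeomorph_quot_of_fibers {X Y : Type*} [TopologicalSpace X] [CompactSpace X]
    [TopologicalSpace Y] [T2Space Y] {r : X → X → Prop} {f : X → Y} (hf : Continuous f)
    (hsurj : Function.Surjective f) (hfib : ∀ x y, f x = f y ↔ r x y) :
    ∃ Φ : Quot r ≃ₜ Y, ∀ x, Φ (Quot.mk r x) = f x := by
  let e : Quot r ≃ Y := Equiv.ofBijective (Quot.lift f fun x y h => (hfib x y).2 h)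
    ⟨by rintro ⟨x⟩ ⟨y⟩ h; exact Quot.sound ((hfib x y).1 h),
      fun y => let ⟨x, hx⟩ := hsurj y; ⟨Quot.mk r x, hx⟩⟩
  have he : Continuous e := continuous_quot_lift _ hf
  exact ⟨he.homeoOfEquivCompactToT2, fun _ => rfl⟩

@[simp] lemma Complex.toQuat_re (z : ℂ) : z.toQuat.re = z.re := rfl

@[simp] lemma Complex.toQuat_imI (z : ℂ) : z.toQuat.imI = z.im := rfl

@[simp] lemma Complex.toQuat_imJ (z : ℂ) : z.toQuat.imJ = 0 := rfl

@[simp] lemma Complex.toQuat_imK (z : ℂ) : z.toQuat.imK = 0 := rfl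

namespace Quaternion

/-- Writing `x = a + b j` with `a, b ∈ ℂ ⊂ ℍ`, `complexPart x = a` and `jPart x = b`. -/
def complexPart (x : ℍ[ℝ]) : ℂ := ⟨x.re, x.imI⟩

def jPart (x : ℍ[ℝ]) : ℂ := ⟨x.imJ, x.imK⟩

def ofComplexParts (a b : ℂ) : ℍ[ℝ] := ⟨a.re, a.im, b.re, b.im⟩

@[simp] lemma complexPart_ofComplexParts (a b : ℂ) : complexPart (ofComplexParts a b) = a := rfl

@[simp] lemma jPart_ofComplexParts (a b : ℂ) : jPart (ofComplexParts a b) = b := rfl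

lemma ext_complexPart_jPart {x y : ℍ[ℝ]} (h₁ : complexPart x = complexPart y)
    (h₂ : jPart x = jPart y) : x = y := by
  simp only [complexPart, jPart, Complex.mk.injEq] at h₁ h₂
  ext <;> tauto

lemma sq_norm_complexPart_add_sq_norm_jPart (x : ℍ[ℝ]) :
    ‖complexPart x‖ ^ 2 + ‖jPart x‖ ^ 2 = ‖x‖ ^ 2 := by
  rw [Complex.sq_norm, Complex.sq_norm, sq, ← normSq_eq_norm_mul_self, normSq_def']
  simp only [complexPart, jPart, Complex.normSq_mk]
  ring

@[fun_prop]
lemma continuous_complexPart : Continuous complexPart :=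
  Complex.equivRealProdCLM.symm.continuous.comp (continuous_re.prodMk continuous_imI)

@[fun_prop]
lemma continuous_jPart : Continuous jPart :=
  Complex.equivRealProdCLM.symm.continuous.comp (continuous_imJ.prodMk continuous_imK)

section Conjugation

variable (z : ℂ) (x : ℍ[ℝ])

lemma complexPart_toQuat_mul_mul_star :
    complexPart (z.toQuat * x * star z.toQuat) = Complex.normSq z * complexPart x := by
  apply Complex.ext <;>
    simp only [complexPart, re_mul, imI_mul, imJ_mul, imK_mul, re_star, imI_star, imJ_star,
      imK_star, Complex.toQuat_re, Complex.toQuat_imI, Complex.toQuat_imJ, Complex.toQuat_imK,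
      Complex.normSq_apply, Complex.re_ofReal_mul, Complex.im_ofReal_mul] <;> ring

/-- Since `j z̄ = z j`, conjugation by `z` maps `b j` to `z b z j = z² b j`. -/
lemma jPart_toQuat_mul_mul_star :
    jPart (z.toQuat * x * star z.toQuat) = z ^ 2 * jPart x := by
  apply Complex.ext <;>
    simp only [jPart, re_mul, imI_mul, imJ_mul, imK_mul, re_star, imI_star, imJ_star, imK_star,
      Complex.toQuat_re, Complex.toQuat_imI, Complex.toQuat_imJ, Complex.toQuat_imK, sq,
      Complex.mul_re, Complex.mul_im] <;> ring

end Conjugation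

lemma mul_inv_eq_smul_mul_star (p q : ℍ[ℝ]) : p * q⁻¹ = (normSq q)⁻¹ • (p * star q) := by
  rw [inv_def, mul_smul_comm]

lemma exists_norm_eq_one_mul_eq_of_mul_star_eq {p q p' q' : ℍ[ℝ]} (hq : q ≠ 0)
    (hnorm : ‖q‖ = ‖q'‖) (h : p * star q = p' * star q') :
    ∃ u : ℍ[ℝ], ‖u‖ = 1 ∧ p * u = p' ∧ q * u = q' := by
  have hq' : q' ≠ 0 := by rwa [← norm_ne_zero_iff, ← hnorm, norm_ne_zero_iff]
  have hnormSq : normSq q = normSq q' := by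
    rw [normSq_eq_norm_mul_self, hnorm, normSq_eq_norm_mul_self]
  refine ⟨q⁻¹ * q', ?_, ?_, mul_inv_cancel_left₀ hq q'⟩
  · rw [norm_mul, norm_inv, hnorm, inv_mul_cancel₀ (norm_ne_zero_iff.2 hq')]
  · rw [← mul_assoc, mul_inv_eq_smul_mul_star, h, hnormSq, ← mul_inv_eq_smul_mul_star,
      inv_mul_cancel_right₀ hq']

lemma exists_mul_star_eq_of_sq_norm_eq_mul (m : ℍ[ℝ]) {a b : ℝ} (ha : 0 ≤ a) (hb : 0 ≤ b)
    (hm : ‖m‖ ^ 2 = a * b) : ∃ p q : ℍ[ℝ], p * star q = m ∧ ‖p‖ ^ 2 = a ∧ ‖q‖ ^ 2 = b := by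
  rcases hb.eq_or_lt with rfl | hb
  · refine ⟨(√a : ℝ), 0, ?_, ?_, by simp⟩
    · simpa [eq_comm] using hm
    · rw [norm_coe, Real.norm_eq_abs, sq_abs, Real.sq_sqrt ha]
  · refine ⟨((√b)⁻¹ : ℝ) * m, (√b : ℝ), ?_, ?_, ?_⟩
    · rw [star_coe, mul_assoc, ← coe_commutes, ← mul_assoc, ← coe_mul,
        inv_mul_cancel₀ (Real.sqrt_pos.2 hb).ne', coe_one, one_mul]
    · rw [norm_mul, norm_coe, mul_pow, hm, Real.norm_eq_abs, sq_abs, inv_pow,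
        Real.sq_sqrt hb.le]
      field_simp
    · rw [norm_coe, Real.norm_eq_abs, sq_abs, Real.sq_sqrt hb.le]

end Quaternion

noncomputable def hopfMap (x : ℍ[ℝ] × ℍ[ℝ]) : ℂ × ℂ × ℝ :=
  (2 * jPart (x.1 * star x.2), 2 * complexPart (x.1 * star x.2), ‖x.1‖ ^ 2 - ‖x.2‖ ^ 2)

lemma continuous_hopfMap : Continuous hopfMap := by
  unfold hopfMap
  fun_prop

lemma sq_norm_hopfMap (p q : ℍ[ℝ]) :
    ‖(hopfMap (p, q)).1‖ ^ 2 + ‖(hopfMap (p, q)).2.1‖ ^ 2 + (hopfMap (p, q)).2.2 ^ 2 =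
      (‖p‖ ^ 2 + ‖q‖ ^ 2) ^ 2 := by
  have h := sq_norm_complexPart_add_sq_norm_jPart (p * star q)
  rw [norm_mul, norm_star] at h
  simp only [hopfMap, norm_mul, Complex.norm_two]
  linear_combination 4 * h

lemma hopfMap_mul_right (p q : ℍ[ℝ]) {u : ℍ[ℝ]} (hu : ‖u‖ = 1) :
    hopfMap (p * u, q * u) = hopfMap (p, q) := by
  have hu' : u * star u = 1 := by
    rw [self_mul_star, normSq_eq_norm_mul_self, hu, mul_one, coe_one]
  have hm : p * u * star (q * u) = p * star q := by
    rw [star_mul, mul_assoc, ← mul_assoc u, hu', one_mul]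
  simp only [hopfMap, hm, norm_mul, hu, mul_one]

lemma hopfMap_toQuat_mul (p q : ℍ[ℝ]) {z : ℂ} (hz : ‖z‖ = 1) :
    hopfMap (z.toQuat * p, z.toQuat * q) =
      (z ^ 2 * (hopfMap (p, q)).1, (hopfMap (p, q)).2.1, (hopfMap (p, q)).2.2) := by
  have hm : z.toQuat * p * star (z.toQuat * q) = z.toQuat * (p * star q) * star z.toQuat := by
    rw [star_mul, mul_assoc, mul_assoc, mul_assoc]
  have hnormSq : Complex.normSq z = 1 := by rw [Complex.normSq_eq_norm_sq, hz, one_pow]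
  simp only [hopfMap, hm, complexPart_toQuat_mul_mul_star, jPart_toQuat_mul_mul_star, hnormSq,
    norm_mul, Complex.norm_toQuat, hz, Complex.ofReal_one, one_mul]
  ring_nf

lemma mul_star_eq_of_hopfMap_eq {x y : ℍ[ℝ] × ℍ[ℝ]} (h : hopfMap x = hopfMap y) :
    x.1 * star x.2 = y.1 * star y.2 := by
  simp only [hopfMap, Prod.mk.injEq] at h
  exact ext_complexPart_jPart (mul_left_cancel₀ two_ne_zero h.2.1)
    (mul_left_cancel₀ two_ne_zero h.1)

noncomputable def hopf (x : SphereH2) : SphereCCR :=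
  ⟨hopfMap x.1, by rw [sq_norm_hopfMap, x.2, one_pow]⟩

lemma continuous_hopf : Continuous hopf :=
  (continuous_hopfMap.comp continuous_subtype_val).subtype_mk _

lemma hopf_circleAct (s : Circle) (x : SphereH2) :
    (hopf (circleAct s x)).1 = ((s : ℂ) ^ 2 * (hopf x).1.1, (hopf x).1.2.1, (hopf x).1.2.2) :=
  hopfMap_toQuat_mul x.1.1 x.1.2 (Circle.norm_coe s)

lemma hopf_eq_hopf_iff (x y : SphereH2) : hopf x = hopf y ↔ orbitRelSp1 x y := by
  obtain ⟨⟨p, q⟩, hx⟩ := x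
  obtain ⟨⟨p', q'⟩, hy⟩ := y
  constructor
  · intro h
    have hmap : hopfMap (p, q) = hopfMap (p', q') := congrArg Subtype.val h
    have hm : p * star q = p' * star q' := mul_star_eq_of_hopfMap_eq hmap
    have hdiff : ‖p‖ ^ 2 - ‖q‖ ^ 2 = ‖p'‖ ^ 2 - ‖q'‖ ^ 2 := congrArg (·.2.2) hmap
    have hpn : ‖p‖ = ‖p'‖ := by nlinarith [norm_nonneg p, norm_nonneg p']
    have hqn : ‖q‖ = ‖q'‖ := by nlinarith [norm_nonneg q, norm_nonneg q']
    suffices ∃ u : ℍ[ℝ], ‖u‖ = 1 ∧ p * u = p' ∧ q * u = q' by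
      obtain ⟨u, hu, hpu, hqu⟩ := this
      exact ⟨⟨u, hu⟩, by rw [hpu, hqu]⟩
    by_cases hq : q = 0
    · have hp : p ≠ 0 := by
        rintro rfl
        simp [hq] at hx
      have hm' : q * star p = q' * star p' := by
        simpa only [star_mul, star_star] using congrArg star hm
      obtain ⟨u, hu, hqu, hpu⟩ := exists_norm_eq_one_mul_eq_of_mul_star_eq hp hpn hm'
      exact ⟨u, hu, hpu, hqu⟩
    · exact exists_norm_eq_one_mul_eq_of_mul_star_eq hq hqn hm
  · rintro ⟨⟨u, hu⟩, hxy⟩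
    simp only [Prod.mk.injEq] at hxy
    obtain ⟨rfl, rfl⟩ := hxy
    exact Subtype.ext (hopfMap_mul_right p q hu).symm

lemma hopf_surjective : Function.Surjective hopf := by
  rintro ⟨⟨v, w, h⟩, hvwh⟩
  set m := ofComplexParts (w / 2) (v / 2)
  have hm : ‖m‖ ^ 2 = (1 + h) / 2 * ((1 - h) / 2) := by
    rw [← sq_norm_complexPart_add_sq_norm_jPart, complexPart_ofComplexParts, jPart_ofComplexParts,
      norm_div, norm_div, Complex.norm_two]
    linear_combination hvwh / 4
  have hh : h ^ 2 ≤ 1 := by nlinarith [norm_nonneg v, norm_nonneg w]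
  obtain ⟨p, q, hpq, hp, hq⟩ :=
    exists_mul_star_eq_of_sq_norm_eq_mul m (by nlinarith) (by nlinarith) hm
  refine ⟨⟨(p, q), by simp only; rw [hp, hq]; ring⟩, Subtype.ext ?_⟩
  simp only [hopf, hopfMap, hpq, hp, hq, m, complexPart_ofComplexParts, jPart_ofComplexParts]
  refine Prod.ext (mul_div_cancel₀ _ two_ne_zero) (Prod.ext (mul_div_cancel₀ _ two_ne_zero) ?_)
  ring

instance : CompactSpace SphereH2 := by
  refine isCompact_iff_compactSpace.1 <|
    (isCompact_closedBall (0 : ℍ[ℝ] × ℍ[ℝ]) 1).of_isClosed_subset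
      (isClosed_eq (by fun_prop) continuous_const) fun x (hx : ‖x.1‖ ^ 2 + ‖x.2‖ ^ 2 = 1) => ?_
  rw [mem_closedBall_zero_iff, Prod.norm_def]
  exact max_le (by nlinarith [norm_nonneg x.1, norm_nonneg x.2])
    (by nlinarith [norm_nonneg x.1, norm_nonneg x.2])

/-- There is a homeomorphism `Φ : S⁷/Sp(1) ≃ S⁴ ⊂ ℂ × ℂ × ℝ` such that
`Φ(s · x) = (s² v, w, h)` whenever `Φ(x) = (v, w, h)`, for all `s ∈ Circle` and all
`x ∈ S⁷/Sp(1)`. -/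
theorem orbit_space_S7_Sp1_homeo_S4_circle_equivariant :
    ∃ Φ : Quot orbitRelSp1 ≃ₜ SphereCCR,
      ∀ (s : Circle) (x : SphereH2),
        (Φ (Quot.mk orbitRelSp1 (circleAct s x))).val =
          ((s : ℂ) ^ 2 * (Φ (Quot.mk orbitRelSp1 x)).val.1,
            (Φ (Quot.mk orbitRelSp1 x)).val.2.1,
            (Φ (Quot.mk orbitRelSp1 x)).val.2.2) := by
  obtain ⟨Φ, hΦ⟩ :=
    exists_homeomorph_quot_of_fibers continuous_hopf hopf_surjective hopf_eq_hopf_iff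
  exact ⟨Φ, fun s x => by simp only [hΦ, hopf_circleAct]⟩
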